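/- There exists a constant C₁ > 0 with the following property: for every α with 0 < α ≤ π and α ≠ 2π/3, and every sequence (ε_n) of positive reals with ε_n ≥ C₁·(log n)/n for all sufficiently large n and ε_n → 0, if X_1, …, X_n are drawn independently from the uniform probability measure on the circle S¹, then the probability that the random ε_n-distance graph on {X_1, …, X_n} with parameter α has chromatic number exactly 3 tends to 1 as n → ∞. -/

import Mathlib

/-- The circle `S¹ = ℝ/2πℤ` with its quotient metric. -/
abbrev Circle2 : Type := AddCircle (2 * Real.pi)

instance : Fact (0 < 2 * Real.pi) := ⟨by positivity⟩

/-- `X` is an `r`-net of the circle. -/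
def cIsNet (r : ℝ) (X : Set Circle2) : Prop :=
  ∀ y : Circle2, ∃ x ∈ X, dist x y ≤ r

/-- The ε-distance graph with parameter α on a set `X ⊆ S¹`: distinct points are
adjacent iff their distance lies in `[α - ε, α + ε]`. -/
def cDistGraph (X : Set Circle2) (α ε : ℝ) : SimpleGraph X where
  Adj x y := x ≠ y ∧ α - ε ≤ dist x.1 y.1 ∧ dist x.1 y.1 ≤ α + ε
  symm := by
    constructor
    intro x y h
    exact ⟨h.1.symm, by rw [dist_comm]; exact h.2.1, by rw [dist_comm]; exact h.2.2⟩
  loopless := ⟨fun x h => h.1 rfl⟩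

/-- The ε-distance graph with parameter α on the whole circle `S¹`. -/
def cDistGraphAll (α ε : ℝ) : SimpleGraph Circle2 where
  Adj x y := x ≠ y ∧ α - ε ≤ dist x y ∧ dist x y ≤ α + ε
  symm := by
    constructor
    intro x y h
    exact ⟨h.1.symm, by rw [dist_comm]; exact h.2.1, by rw [dist_comm]; exact h.2.2⟩
  loopless := ⟨fun x h => h.1 rfl⟩

open MeasureTheory

/-- The uniform (Haar) probability measure on the circle `ℝ/2πℤ`. -/
noncomputable def circleUniform : Measure Circle2 :=
  (ENNReal.ofReal (2 * Real.pi))⁻¹ • (volume : Measure Circle2)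

/-!
If `s α` lies within `π/3` of `π` (for `0 < α ≤ π` such an `s ≥ 1` exists unless `α = 2π/3`),
cut the circle into `3s` arcs of length `2π/(3s)` and colour them `0, 1, 2, 0, 1, 2, …`: two
points at distance in `[2π/(3s), 4π/(3s)]` lie in arcs whose indices differ by `1` or `2`, so
every ε-distance graph with `s ε ≤ π/3 - |s α - π|` is `3`-colourable.

Conversely, `α` is within `ε/2` of the norm of a point `z` of odd order `k`. If the sample is an
`ε/4`-net, snapping the orbit `0, z, 2z, …, kz = 0` to the sample gives a closed walk of odd
length, so `χ ≥ 3`. A union bound over `⌈4π/δ⌉` arcs shows that `n` uniform points fail to be a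
`δ`-net with probability at most `⌈4π/δ⌉ e^{-nδ/2π}`, which tends to `0` for
`δ = ε_n/4 ≥ 4π log n / n`.
-/

open Real Filter Metric Topology
open scoped ENNReal

namespace SimpleGraph

theorem three_le_chromaticNumber_of_odd_period {V : Type*} {G : SimpleGraph V} (f : ℕ → V)
    (hadj : ∀ i, G.Adj (f i) (f (i + 1))) {k : ℕ} (hk : Odd k) (hf : f k = f 0) :
    3 ≤ G.chromaticNumber := by
  let w : ∀ n, G.Walk (f 0) (f n) := fun n => Nat.rec .nil (fun i w => w.concat (hadj i)) n
  have hw : ∀ n, (w n).length = n := by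
    intro n
    induction n with
    | zero => rfl
    | succ n ih => exact (Walk.length_concat (w n) (hadj n)).trans (congrArg (· + 1) ih)
  exact ((w k).copy rfl hf).three_le_chromaticNumber_of_odd_loop (by simpa [hw] using hk)

end SimpleGraph

namespace AddCircle

theorem norm_coe_le_abs (p x : ℝ) : ‖(x : AddCircle p)‖ ≤ |x| :=
  QuotientAddGroup.norm_mk_le_norm

theorem exists_coe_eq_abs_eq_norm (p : ℝ) (x : AddCircle p) :
    ∃ w : ℝ, (w : AddCircle p) = x ∧ |w| = ‖x‖ := by
  obtain ⟨u, rfl⟩ := QuotientAddGroup.mk_surjective x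
  refine ⟨u - round (p⁻¹ * u) * p, ?_, (norm_eq p).symm⟩
  rw [coe_sub, ← zsmul_eq_mul, coe_zsmul, coe_period, smul_zero, sub_zero]

theorem norm_coe_of_le_half_period {p α : ℝ} (hα : 0 ≤ α) (hαp : α ≤ |p| / 2) :
    ‖(α : AddCircle p)‖ = α := by
  rcases eq_or_ne p 0 with rfl | hp
  · simp [abs_of_nonneg hα]
  · rw [(norm_coe_eq_abs_iff p hp).mpr (by rwa [abs_of_nonneg hα]), abs_of_nonneg hα]

theorem abs_norm_coe_sub_le {p α : ℝ} (hα : 0 ≤ α) (hαp : α ≤ |p| / 2) (x : ℝ) :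
    |‖(x : AddCircle p)‖ - α| ≤ |x - α| :=
  calc |‖(x : AddCircle p)‖ - α| = |‖(x : AddCircle p)‖ - ‖(α : AddCircle p)‖| := by
        rw [norm_coe_of_le_half_period hα hαp]
    _ ≤ ‖((x - α : ℝ) : AddCircle p)‖ := by rw [coe_sub]; exact abs_norm_sub_norm_le _ _
    _ ≤ |x - α| := norm_coe_le_abs p _

end AddCircle

theorem exists_odd_nsmul_eq_zero_abs_norm_sub_le {α ζ : ℝ} (hα : 0 ≤ α) (hαπ : α ≤ π)
    (hζ : 0 < ζ) : ∃ (z : Circle2) (k : ℕ), Odd k ∧ k • z = 0 ∧ |‖z‖ - α| ≤ ζ := by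
  set k : ℕ := 2 * ⌈π / ζ⌉₊ + 1
  have hk : π / ζ < k := by
    have := Nat.le_ceil (π / ζ); push_cast [k]; linarith [Nat.cast_nonneg (α := ℝ) ⌈π / ζ⌉₊]
  have hk0 : (0 : ℝ) < k := by positivity
  set m : ℤ := round (k * α / (2 * π))
  -- `2πm/k` is the multiple of `2π/k` nearest to `α`.
  refine ⟨((2 * π * m / k : ℝ) : Circle2), k, odd_two_mul_add_one _, ?_, ?_⟩
  · rw [← AddCircle.coe_nsmul, nsmul_eq_mul, mul_div_cancel₀ _ hk0.ne', AddCircle.coe_eq_zero_iff]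
    exact ⟨m, by rw [zsmul_eq_mul]; ring⟩
  · refine (AddCircle.abs_norm_coe_sub_le hα (by rw [abs_of_pos two_pi_pos]; linarith) _).trans ?_
    have hround := abs_sub_round (k * α / (2 * π))
    calc |2 * π * m / k - α| = 2 * π / k * |k * α / (2 * π) - m| := by
          rw [← abs_of_pos (by positivity : 0 < 2 * π / k), ← abs_mul, ← abs_neg]
          congr 1; field_simp; ring
      _ ≤ 2 * π / k * (1 / 2) := by gcongr
      _ ≤ ζ := by
          rw [div_lt_iff₀ hζ] at hk
          rw [div_mul_eq_mul_div, div_le_iff₀ (by positivity)]; nlinarith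

theorem three_le_chromaticNumber_cDistGraph {X : Set Circle2} {α ε δ : ℝ} (hαπ : α ≤ π)
    (hεα : ε < α) (hδ : 0 ≤ δ) (hδε : 2 * δ < ε) (hX : cIsNet δ X) :
    3 ≤ (cDistGraph X α ε).chromaticNumber := by
  obtain ⟨z, k, hk, hkz, hz⟩ :=
    exists_odd_nsmul_eq_zero_abs_norm_sub_le (by linarith) hαπ (sub_pos.mpr hδε)
  choose g hgX hg using hX
  -- Snap the closed walk `i ↦ i • z` of odd length `k` to the net.
  refine SimpleGraph.three_le_chromaticNumber_of_odd_period (fun i => ⟨g (i • z), hgX _⟩)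
    (fun i => ?_) hk (by simp [hkz])
  have hstep : dist (i • z) ((i + 1) • z) = ‖z‖ := by
    rw [dist_comm, dist_eq_norm, succ_nsmul, add_sub_cancel_left]
  have hsnap : |dist (g (i • z)) (g ((i + 1) • z)) - ‖z‖| ≤ 2 * δ := by
    rw [← hstep, ← Real.dist_eq]
    linarith [dist_dist_dist_le (g (i • z)) (g ((i + 1) • z)) (i • z) ((i + 1) • z),
      hg (i • z), hg ((i + 1) • z)]
  have h₁ := abs_le.mp hz
  have h₂ := abs_le.mp hsnap
  refine ⟨fun heq => ?_, by dsimp only; linarith, by dsimp only; linarith⟩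
  have : g (i • z) = g ((i + 1) • z) := congrArg Subtype.val heq
  rw [this, dist_self] at h₂
  linarith

theorem intCast_floor_div_add_ne {ℓ u w : ℝ} (hℓ : 0 < ℓ) (h₁ : ℓ ≤ w) (h₂ : w ≤ 2 * ℓ) :
    ((⌊(u + w) / ℓ⌋ : ℤ) : ZMod 3) ≠ ((⌊u / ℓ⌋ : ℤ) : ZMod 3) := by
  have hlo : ⌊u / ℓ⌋ + 1 ≤ ⌊(u + w) / ℓ⌋ := by
    rw [← Int.floor_add_one]
    exact Int.floor_mono (by rw [add_div]; gcongr; rwa [le_div_iff₀ hℓ, one_mul])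
  have hhi : ⌊(u + w) / ℓ⌋ ≤ ⌊u / ℓ⌋ + 2 := by
    rw [← Int.floor_add_intCast]
    exact Int.floor_mono (by rw [add_div]; push_cast; gcongr; rwa [div_le_iff₀ hℓ])
  rw [Ne, ZMod.intCast_eq_intCast_iff']
  omega

theorem sectorColor_periodic (s : ℕ) :
    Function.Periodic (fun u : ℝ => ((⌊u / (2 * π / (3 * s))⌋ : ℤ) : ZMod 3)) (2 * π) := by
  intro u
  rcases Nat.eq_zero_or_pos s with rfl | hs
  · simp
  have h : (u + 2 * π) / (2 * π / (3 * s)) = u / (2 * π / (3 * s)) + ((3 * s : ℕ) : ℤ) := by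
    push_cast; field_simp
  dsimp only
  rw [h, Int.floor_add_intCast, Int.cast_add, Int.cast_natCast,
    (ZMod.natCast_eq_zero_iff _ _).mpr (dvd_mul_right 3 s), add_zero]

noncomputable def sectorColor (s : ℕ) : Circle2 → ZMod 3 :=
  (sectorColor_periodic s).lift

theorem sectorColor_ne_of_dist {s : ℕ} (hs : 0 < s) {a b : Circle2}
    (h₁ : 2 * π / (3 * s) ≤ dist a b) (h₂ : dist a b ≤ 2 * (2 * π / (3 * s))) :
    sectorColor s a ≠ sectorColor s b := by
  have hℓ : 0 < 2 * π / (3 * s) := by positivity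
  obtain ⟨w, hw, hwab⟩ := AddCircle.exists_coe_eq_abs_eq_norm _ (b - a)
  obtain ⟨u, rfl⟩ := QuotientAddGroup.mk_surjective a
  obtain rfl : b = ((u + w : ℝ) : Circle2) := by rw [AddCircle.coe_add, hw]; abel
  rw [dist_comm, dist_eq_norm, ← hwab] at h₁ h₂
  rcases le_total 0 w with hw0 | hw0
  · rw [abs_of_nonneg hw0] at h₁ h₂
    exact (intCast_floor_div_add_ne hℓ h₁ h₂).symm
  · rw [abs_of_nonpos hw0] at h₁ h₂
    have := intCast_floor_div_add_ne (u := u + w) hℓ h₁ h₂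
    rwa [add_neg_cancel_right] at this

theorem cDistGraph_colorable_three (X : Set Circle2) {α ε : ℝ} {s : ℕ} (hs : 0 < s)
    (hband : |s * α - π| + s * ε ≤ π / 3) : (cDistGraph X α ε).Colorable 3 := by
  have hband' := abs_le.mp (le_sub_iff_add_le.mpr hband)
  have h₁ : 2 * π / (3 * s) ≤ α - ε := by rw [div_le_iff₀ (by positivity)]; linarith
  have h₂ : α + ε ≤ 2 * (2 * π / (3 * s)) := by
    rw [mul_div_assoc', le_div_iff₀ (by positivity)]; linarith
  simpa using (SimpleGraph.Coloring.mk (G := cDistGraph X α ε) (fun x => sectorColor s x)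
    fun hab => sectorColor_ne_of_dist hs (h₁.trans hab.2.1) (hab.2.2.trans h₂)).colorable

theorem exists_nat_abs_mul_sub_pi_lt {α : ℝ} (hα0 : 0 < α) (hαπ : α ≤ π)
    (hα : α ≠ 2 * π / 3) : ∃ s : ℕ, 0 < s ∧ |s * α - π| < π / 3 := by
  rcases hα.lt_or_gt with hα | hα
  · -- Steps of length `α < 2π/3` cannot jump over the open interval `(2π/3, 4π/3)`.
    refine ⟨⌊2 * π / (3 * α)⌋₊ + 1, Nat.succ_pos _, abs_sub_lt_iff.mpr ⟨?_, ?_⟩⟩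
    · have := Nat.floor_le (by positivity : 0 ≤ 2 * π / (3 * α))
      rw [le_div_iff₀ (by positivity)] at this
      push_cast; nlinarith
    · have := Nat.lt_floor_add_one (2 * π / (3 * α))
      rw [div_lt_iff₀ (by positivity)] at this
      push_cast; nlinarith
  · exact ⟨1, one_pos, by rw [abs_sub_lt_iff]; constructor <;> linarith⟩

theorem chromaticNumber_cDistGraph_eq_three {X : Set Circle2} {α ε : ℝ} {s : ℕ} (hs : 0 < s)
    (hband : |s * α - π| + s * ε ≤ π / 3) (hαπ : α ≤ π) (hε : 0 < ε) (hεα : ε < α)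
    (hX : cIsNet (ε / 4) X) : (cDistGraph X α ε).chromaticNumber = 3 :=
  le_antisymm (by simpa using (cDistGraph_colorable_three X hs hband).chromaticNumber_le)
    (three_le_chromaticNumber_cDistGraph hαπ hεα (by positivity) (by linarith) hX)

instance : IsProbabilityMeasure circleUniform :=
  ⟨by rw [circleUniform, Measure.smul_apply, smul_eq_mul, AddCircle.measure_univ,
    ENNReal.inv_mul_cancel (by positivity) ENNReal.ofReal_ne_top]⟩

theorem circleUniform_compl_closedBall (c : Circle2) {ρ : ℝ} (hρ : 0 ≤ ρ) (hρπ : ρ ≤ π) :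
    circleUniform (closedBall c ρ)ᶜ = ENNReal.ofReal (1 - ρ / π) := by
  have hball : circleUniform (closedBall c ρ) = ENNReal.ofReal (ρ / π) := by
    rw [circleUniform, Measure.smul_apply, smul_eq_mul, AddCircle.volume_closedBall,
      min_eq_right (by linarith), ← ENNReal.div_eq_inv_mul,
      ← ENNReal.ofReal_div_of_pos two_pi_pos, mul_div_mul_left _ _ two_ne_zero]
  rw [prob_compl_eq_one_sub measurableSet_closedBall, hball, ← ENNReal.ofReal_one,
    ← ENNReal.ofReal_sub _ (by positivity)]

theorem exists_dist_coe_mul_le {h : ℝ} (hh : 0 < h) (y : Circle2) :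
    ∃ j < ⌈2 * π / h⌉₊, dist ((j * h : ℝ) : Circle2) y ≤ h := by
  obtain ⟨u, ⟨hu0, hu⟩, rfl⟩ := AddCircle.eq_coe_Ico y
  have hj := Nat.floor_le (div_nonneg hu0 hh.le)
  have hj' := Nat.lt_floor_add_one (u / h)
  rw [le_div_iff₀ hh] at hj
  rw [div_lt_iff₀ hh] at hj'
  refine ⟨⌊u / h⌋₊, Nat.floor_lt_ceil_of_lt_of_pos (by gcongr) (by positivity), ?_⟩
  rw [dist_eq_norm, ← AddCircle.coe_sub]
  exact (AddCircle.norm_coe_le_abs _ _).trans (abs_le.mpr ⟨by linarith, by linarith⟩)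

theorem measure_not_isNet_le (n : ℕ) {δ : ℝ} (hδ : 0 < δ) (hδπ : δ ≤ 2 * π) :
    (Measure.pi fun _ : Fin n => circleUniform) {x | ¬cIsNet δ (Set.range x)} ≤
      ENNReal.ofReal (⌈4 * π / δ⌉₊ * exp (-(n * δ / (2 * π)))) := by
  set B : ℕ → Set Circle2 := fun j => closedBall ((j * (δ / 2) : ℝ) : Circle2) (δ / 2)
  -- A sample that meets each of the `⌈4π/δ⌉` balls `B j` of radius `δ/2` is a `δ`-net.
  have hsub : {x : Fin n → Circle2 | ¬cIsNet δ (Set.range x)} ⊆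
      ⋃ j ∈ Finset.range ⌈4 * π / δ⌉₊, Set.univ.pi fun _ => (B j)ᶜ := by
    intro x hx
    by_contra hcover
    refine hx fun y => ?_
    obtain ⟨j, hj, hjy⟩ := exists_dist_coe_mul_le (half_pos hδ) y
    rw [show 2 * π / (δ / 2) = 4 * π / δ by field_simp; ring] at hj
    obtain ⟨i, hi⟩ : ∃ i, x i ∈ B j := by
      by_contra! h
      exact hcover (Set.mem_iUnion₂.mpr ⟨j, Finset.mem_range.mpr hj, fun i _ => h i⟩)
    exact ⟨x i, Set.mem_range_self i, (dist_triangle _ _ _).trans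
      (by linarith [mem_closedBall.mp hi])⟩
  have hball : ∀ j, circleUniform (B j)ᶜ ≤ ENNReal.ofReal (exp (-(δ / (2 * π)))) := fun j => by
    rw [circleUniform_compl_closedBall _ (by positivity) (by linarith), div_div,
      mul_comm 2 π]
    exact ENNReal.ofReal_le_ofReal (one_sub_le_exp_neg _)
  calc _ ≤ ∑ j ∈ Finset.range ⌈4 * π / δ⌉₊,
        (Measure.pi fun _ : Fin n => circleUniform) (Set.univ.pi fun _ => (B j)ᶜ) :=
        (measure_mono hsub).trans (measure_biUnion_finset_le _ _)
    _ ≤ ∑ _j ∈ Finset.range ⌈4 * π / δ⌉₊, ENNReal.ofReal (exp (-(δ / (2 * π)))) ^ n := by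
        gcongr with j
        rw [Measure.pi_pi, Finset.prod_const, Finset.card_univ, Fintype.card_fin]
        gcongr
        exact hball j
    _ = ENNReal.ofReal (⌈4 * π / δ⌉₊ * exp (-(n * δ / (2 * π)))) := by
        rw [Finset.sum_const, Finset.card_range, nsmul_eq_mul, ← ENNReal.ofReal_pow (by positivity),
          ← Real.exp_nat_mul, ENNReal.ofReal_mul (by positivity), ENNReal.ofReal_natCast]
        ring_nf

theorem tendsto_ceil_div_mul_exp {δ : ℕ → ℝ} (hδ : ∀ n, 0 < δ n)
    (hlog : ∀ᶠ n : ℕ in atTop, 4 * π * (log n / n) ≤ δ n) :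
    Tendsto (fun n : ℕ => ⌈4 * π / δ n⌉₊ * exp (-(n * δ n / (2 * π)))) atTop (𝓝 0) := by
  refine squeeze_zero' (.of_forall fun n => by positivity) ?_
    (tendsto_const_div_atTop_nhds_zero_nat 2)
  filter_upwards [hlog, eventually_ge_atTop 3] with n hn hn3
  have hn0 : (0 : ℝ) < n := by positivity
  have hn3' : (3 : ℝ) ≤ n := Nat.ofNat_le_cast.mpr hn3
  have hlog1 : 1 ≤ log n := by
    rw [le_log_iff_exp_le hn0]
    linarith [exp_one_lt_d9]
  rw [mul_div_assoc', div_le_iff₀ hn0] at hn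
  have hexp : exp (-(n * δ n / (2 * π))) ≤ ((n : ℝ) ^ 2)⁻¹ := by
    rw [← exp_log (pow_pos hn0 2), ← exp_neg, exp_le_exp, neg_le_neg_iff, log_pow,
      le_div_iff₀ two_pi_pos]
    push_cast; linarith
  have hceil : (⌈4 * π / δ n⌉₊ : ℝ) ≤ 2 * n := by
    have h4π : 4 * π ≤ δ n * n := by nlinarith [pi_pos]
    have hδn : δ n ≤ δ n * n := le_mul_of_one_le_right (hδ n).le (by linarith)
    refine (Nat.ceil_lt_add_one (div_pos (by positivity) (hδ n)).le).le.trans ?_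
    rw [div_add_one (hδ n).ne', div_le_iff₀ (hδ n)]
    linarith
  calc _ ≤ 2 * n * ((n : ℝ) ^ 2)⁻¹ := by gcongr
    _ = 2 / n := by field_simp

theorem tendsto_measure_of_tendsto_measure_compl {ι : Type*} {l : Filter ι} {Ω : ι → Type*}
    [∀ i, MeasurableSpace (Ω i)] {μ : ∀ i, Measure (Ω i)} [∀ i, IsProbabilityMeasure (μ i)]
    {E : ∀ i, Set (Ω i)} (h : Tendsto (fun i => μ i (E i)ᶜ) l (𝓝 0)) :
    Tendsto (fun i => μ i (E i)) l (𝓝 1) := by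
  have hlow : Tendsto (fun i => 1 - μ i (E i)ᶜ) l (𝓝 1) := by
    simpa using ENNReal.Tendsto.sub tendsto_const_nhds h (.inl ENNReal.one_ne_top)
  refine tendsto_of_tendsto_of_tendsto_of_le_of_le hlow tendsto_const_nhds (fun i => ?_)
    (fun i => prob_le_one)
  rw [tsub_le_iff_right, ← measure_univ (μ := μ i)]
  exact measure_univ_le_add_compl _

/-- there is a constant `C₁ > 0` such that for all `0 < α ≤ π`, `α ≠ 2π/3`,
if `ε_n ≥ C₁ log n / n` eventually and `ε_n → 0`, then the random ε_n-distance graph with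
parameter `α` on `n` i.i.d. uniform points of `S¹` has chromatic number exactly `3` a.a.s. -/
theorem stmt_18 :
    ∃ C : ℝ, 0 < C ∧ ∀ α : ℝ, 0 < α → α ≤ Real.pi → α ≠ 2 * Real.pi / 3 →
      ∀ ε : ℕ → ℝ, (∀ n, 0 < ε n) →
      (∀ᶠ n : ℕ in Filter.atTop, C * (Real.log n / n) ≤ ε n) →
      Filter.Tendsto ε Filter.atTop (nhds 0) →
      Filter.Tendsto
        (fun n => (Measure.pi fun _ : Fin n => circleUniform)
          {x : Fin n → Circle2 |
            (cDistGraph (Set.range x) α (ε n)).chromaticNumber = 3})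
        Filter.atTop (nhds 1) := by
  refine ⟨16 * π, by positivity, fun α hα0 hαπ hα ε hε hεlog hεlim => ?_⟩
  obtain ⟨s, hs, hsα⟩ := exists_nat_abs_mul_sub_pi_lt hα0 hαπ hα
  have hsmall : ∀ᶠ n in atTop, ε n < α ∧ s * ε n < π / 3 - |s * α - π| :=
    (hεlim.eventually (gt_mem_nhds hα0)).and <|
      (hεlim.const_mul (s : ℝ)).eventually (gt_mem_nhds (by simpa using hsα))
  have hbound := ENNReal.tendsto_ofReal <| tendsto_ceil_div_mul_exp (fun n => by linarith [hε n])
    (hεlog.mono fun n (hn : 16 * π * _ ≤ ε n) => show _ ≤ ε n / 4 by linarith)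
  rw [ENNReal.ofReal_zero] at hbound
  refine tendsto_measure_of_tendsto_measure_compl <| tendsto_of_tendsto_of_tendsto_of_le_of_le'
    tendsto_const_nhds hbound (.of_forall fun _ => zero_le) ?_
  filter_upwards [hsmall] with n ⟨hεα, hεs⟩
  have hsub : {x : Fin n → Circle2 | (cDistGraph (Set.range x) α (ε n)).chromaticNumber = 3}ᶜ ⊆
      {x | ¬cIsNet (ε n / 4) (Set.range x)} := fun x hx hX =>
    hx (chromaticNumber_cDistGraph_eq_three hs (by linarith) hαπ (hε n) hεα hX)
  exact (measure_mono hsub).trans (measure_not_isNet_le n (by linarith [hε n]) (by linarith))
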